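/- The normalization constants of the Pastro biorthogonality are given by the product formula: for every nonnegative integer n, ∏_{k=0}^{n-1} (1 - α_k β_k) = (a;q)_n (q;q)_n / ( (a b^{-1} q;q)_n (b;q)_n ), where α_k = -(a^{-1} b q)^{k+1} (a b^{-1};q)_{k+1} / (b;q)_{k+1} and β_k = -(a^{-1} b)^{-k-1} (b q^{-1};q)_{k+1} / (a b^{-1} q;q)_{k+1}. -/

import Mathlib

/-!
With `z = a b⁻¹`, the powers of `a⁻¹ b` cancel and
`α_k β_k = q^{k+1} (z;q)_{k+1} (b q⁻¹;q)_{k+1} / ((b;q)_{k+1} (z q;q)_{k+1})`.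
Since `(w;q)_{k+1} (1 - w q^{k+1}) = (1 - w) (w q;q)_{k+1}`, both Pochhammer quotients collapse to
single factors, and the elementary identity
`(1 - z q^{k+1}) (1 - b q^k) - q^{k+1} (1 - z) (1 - b q⁻¹) = (1 - a q^k) (1 - q^{k+1})`
shows that `1 - α_k β_k` is the `k`-th factor of the right-hand side.
-/

/-- The q-Pochhammer symbol `(z;q)_k = ∏_{j=0}^{k-1} (1 - z q^j)`. -/
noncomputable def qPoch (q z : ℝ) (k : ℕ) : ℝ :=
  ∏ j ∈ Finset.range k, (1 - z * q ^ j)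

open Finset

lemma qPoch_succ (q z : ℝ) (k : ℕ) : qPoch q z (k + 1) = qPoch q z k * (1 - z * q ^ k) :=
  prod_range_succ _ _

lemma qPoch_succ_mul_one_sub (q z : ℝ) (k : ℕ) :
    qPoch q z (k + 1) * (1 - z * q * q ^ k) = (1 - z) * qPoch q (z * q) (k + 1) := by
  rw [qPoch, qPoch, mul_assoc, ← pow_succ', ← prod_range_succ (fun j => 1 - z * q ^ j),
    prod_range_succ', pow_zero, mul_one, mul_comm]
  exact congrArg _ (prod_congr rfl fun j _ => by ring)

lemma qPoch_ne_zero {q z : ℝ} (h : ∀ j : ℕ, z * q ^ j ≠ 1) (k : ℕ) : qPoch q z k ≠ 0 :=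
  prod_ne_zero_iff.2 fun j _ => sub_ne_zero.2 (h j).symm

noncomputable def pastroAlpha (q a b : ℝ) (k : ℕ) : ℝ :=
  -(a⁻¹ * b * q) ^ (k + 1) * qPoch q (a * b⁻¹) (k + 1) / qPoch q b (k + 1)

noncomputable def pastroBeta (q a b : ℝ) (k : ℕ) : ℝ :=
  -(a⁻¹ * b) ^ (-(k : ℤ) - 1) * qPoch q (b * q⁻¹) (k + 1) / qPoch q (a * b⁻¹ * q) (k + 1)

section

variable {q a b : ℝ}

lemma pastroAlpha_mul_pastroBeta (ha : a ≠ 0) (hb : b ≠ 0) (k : ℕ) :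
    pastroAlpha q a b k * pastroBeta q a b k =
      q ^ (k + 1) * qPoch q (a * b⁻¹) (k + 1) * qPoch q (b * q⁻¹) (k + 1) /
        (qPoch q b (k + 1) * qPoch q (a * b⁻¹ * q) (k + 1)) := by
  have hpow : (a⁻¹ * b) ^ (-(k : ℤ) - 1) = ((a⁻¹ * b) ^ (k + 1))⁻¹ := by
    rw [← zpow_natCast, ← zpow_neg]
    congr 1
    push_cast
    ring
  rw [pastroAlpha, pastroBeta, hpow]
  field_simp
  ring

lemma one_sub_pastroAlpha_mul_pastroBeta (hq : q ≠ 0) (ha : a ≠ 0) (hb : b ≠ 0) {k : ℕ}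
    (hB : qPoch q b (k + 1) ≠ 0) (hC : qPoch q (a * b⁻¹ * q) (k + 1) ≠ 0) :
    1 - pastroAlpha q a b k * pastroBeta q a b k =
      (1 - a * q ^ k) * (1 - q * q ^ k) / ((1 - a * b⁻¹ * q * q ^ k) * (1 - b * q ^ k)) := by
  have hbk : 1 - b * q ^ k ≠ 0 := right_ne_zero_of_mul (qPoch_succ q b k ▸ hB)
  have hzk : 1 - a * b⁻¹ * q * q ^ k ≠ 0 := right_ne_zero_of_mul (qPoch_succ q _ k ▸ hC)
  have hz := qPoch_succ_mul_one_sub q (a * b⁻¹) k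
  have hw := qPoch_succ_mul_one_sub q (b * q⁻¹) k
  rw [inv_mul_cancel_right₀ hq] at hw
  have hzk' : b - a * q * q ^ k ≠ 0 := by
    contrapose! hzk
    field_simp
    linear_combination hzk
  rw [pastroAlpha_mul_pastroBeta ha hb, eq_div_of_mul_eq hzk hz, eq_div_of_mul_eq hbk hw]
  generalize qPoch q b (k + 1) = B at hB
  generalize qPoch q (a * b⁻¹ * q) (k + 1) = C at hC
  field_simp
  ring

end

theorem pastro_norm_product_general (q a b : ℝ) (hq : q ≠ 0)
    (ha : a ≠ 0) (hb : b ≠ 0)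
    (hbq : ∀ m : ℤ, b * q ^ m ≠ 1) (habq : ∀ m : ℤ, a⁻¹ * b * q ^ m ≠ 1)
    (n : ℕ) :
    ∏ k ∈ Finset.range n,
        (1 -
          (-(a⁻¹ * b * q) ^ (k + 1) * qPoch q (a * b⁻¹) (k + 1) / qPoch q b (k + 1)) *
          (-(a⁻¹ * b) ^ (-(k : ℤ) - 1) * qPoch q (b * q⁻¹) (k + 1) /
            qPoch q (a * b⁻¹ * q) (k + 1))) =
      qPoch q a n * qPoch q q n / (qPoch q (a * b⁻¹ * q) n * qPoch q b n) := by
  have hB : ∀ k, qPoch q b k ≠ 0 := qPoch_ne_zero fun j => mod_cast hbq j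
  have hC : ∀ k, qPoch q (a * b⁻¹ * q) k ≠ 0 :=
    qPoch_ne_zero fun j h => habq (-(j + 1)) <| inv_eq_one.mp <| by
      rw [← h, zpow_neg, zpow_add₀ hq, zpow_natCast, zpow_one]
      field_simp
  change ∏ k ∈ range n, (1 - pastroAlpha q a b k * pastroBeta q a b k) = _
  rw [prod_congr rfl fun k _ => one_sub_pastroAlpha_mul_pastroBeta hq ha hb (hB _) (hC _),
    prod_div_distrib, prod_mul_distrib, prod_mul_distrib]
  rfl

/-- Product formula for the normalization constants:
`∏_{k=0}^{n-1} (1 - α_k β_k) = (a;q)_n (q;q)_n / ((a b⁻¹ q;q)_n (b;q)_n)`. -/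
theorem pastro_norm_product (q a b : ℝ) (hq : q ≠ 0) (hq1 : ∀ k : ℤ, k ≠ 0 → q ^ k ≠ 1)
    (ha : a ≠ 0) (hb : b ≠ 0)
    (hbq : ∀ m : ℤ, b * q ^ m ≠ 1) (habq : ∀ m : ℤ, a⁻¹ * b * q ^ m ≠ 1)
    (n : ℕ) :
    ∏ k ∈ Finset.range n,
        (1 -
          (-(a⁻¹ * b * q) ^ (k + 1) * qPoch q (a * b⁻¹) (k + 1) / qPoch q b (k + 1)) *
          (-(a⁻¹ * b) ^ (-(k : ℤ) - 1) * qPoch q (b * q⁻¹) (k + 1) /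
            qPoch q (a * b⁻¹ * q) (k + 1))) =
      qPoch q a n * qPoch q q n / (qPoch q (a * b⁻¹ * q) n * qPoch q b n) :=
  pastro_norm_product_general q a b hq ha hb hbq habq n
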